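/- Let f be any function mapping a finite graph G to a vertex labeling f(G) : V(G) → D such that f(G)(v) = f(G)(w) whenever v and w lie in the same orbit of the automorphism group of G. Then there exist vertex-colored graphs A = (V_A, E_A, ℓ_A) and B = (V_B, E_B, ℓ_B) that are non-isomorphic as colored graphs, such that the augmented colored graphs A' and B', obtained by replacing each node color ℓ(v) with the pair (ℓ(v), f(V,E)(v)), are not distinguished by the 1-WL (color refinement) algorithm. -/

import Mathlib

/-- The multiset of colors (under coloring `c`) of the neighbors of `v` in `G`. -/
noncomputable def nbrColors {V : Type*} [Fintype V] (G : SimpleGraph V) (c : V → ℕ) (v : V) :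
    Multiset ℕ :=
  letI := Classical.decRel G.Adj
  (G.neighborFinset v).val.map c

/-- `C` is a run of color refinement (1-WL) on `G`: since colors are produced by an
injective `RELABEL` of the pair (old color, multiset of neighbors' old colors), two
vertices get equal new colors iff their pairs agree. -/
def IsCR {V : Type*} [Fintype V] (G : SimpleGraph V) (C : ℕ → V → ℕ) : Prop :=
  ∀ t v w, C (t + 1) v = C (t + 1) w ↔
    (C t v = C t w ∧ nbrColors G (C t) v = nbrColors G (C t) w)

/-- `CG`, `CH` is a parallel run of color refinement on `G` and `H`, with the injective
`RELABEL` applied consistently across both graphs. -/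
def IsParallelCR {V W : Type*} [Fintype V] [Fintype W] (G : SimpleGraph V) (H : SimpleGraph W)
    (CG : ℕ → V → ℕ) (CH : ℕ → W → ℕ) : Prop :=
  IsCR G CG ∧ IsCR H CH ∧
  ∀ t v w, CG (t + 1) v = CH (t + 1) w ↔
    (CG t v = CH t w ∧ nbrColors G (CG t) v = nbrColors H (CH t) w)

/-!
Take `A = B = C₁₂(1, 2)`, colored in blocks of three and by parity. The graph is
vertex-transitive, so the orbit-invariant `f` is constant on it and the augmentation splits no
color class. Both colorings are equitable with the same parameters (every vertex has two
neighbors of each color), so color refinement on the disjoint union `A ⊕ B` never refines the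
initial partition, and the two colorings have the same color counts. Yet only the block
coloring has a monochromatic triangle, so the colored graphs are not isomorphic.
-/

open SimpleGraph Function

lemma sum_elim_eq_iff {V W : Type*} {c c' : V → ℕ} {d d' : W → ℕ}
    (hc : ∀ v v', c v = c v' ↔ c' v = c' v') (hd : ∀ w w', d w = d w' ↔ d' w = d' w') (hcd : ∀ v w, c v = d w ↔ c' v = d' w) :
    ∀ x y, Sum.elim c d x = Sum.elim c d y ↔ Sum.elim c' d' x = Sum.elim c' d' y := by
  rintro (v | w) (v' | w')
  · exact hc v v'
  · exact hcd v w'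
  · exact eq_comm.trans ((hcd v' w).trans eq_comm)
  · exact hd w w'

section ColorRefinement

variable {V W : Type*} [Fintype V] [Fintype W]

lemma nbrColors_eq_map_filter (G : SimpleGraph V) [DecidableRel G.Adj] (c : V → ℕ) (v : V) :
    nbrColors G c v = (Finset.univ.filter (G.Adj v)).val.map c := by
  unfold nbrColors
  congr 2
  ext w
  simp

lemma nbrColors_comp (G : SimpleGraph V) (g : ℕ → ℕ) (c : V → ℕ) (v : V) :
    nbrColors G (g ∘ c) v = (nbrColors G c v).map g := by
  simp only [nbrColors, Multiset.map_map]

lemma nbrColors_sum_inl (G : SimpleGraph V) (H : SimpleGraph W) (c : V → ℕ) (d : W → ℕ)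
    (v : V) : nbrColors (G ⊕g H) (Sum.elim c d) (.inl v) = nbrColors G c v := by
  let := Classical.decRel G.Adj
  let := Classical.decRel (G ⊕g H).Adj
  have h : (G ⊕g H).neighborFinset (.inl v) = (G.neighborFinset v).map .inl := by
    ext (w | w) <;> simp
  simp only [nbrColors, h, Finset.map_val, Multiset.map_map]
  rfl

lemma nbrColors_sum_inr (G : SimpleGraph V) (H : SimpleGraph W) (c : V → ℕ) (d : W → ℕ)
    (w : W) : nbrColors (G ⊕g H) (Sum.elim c d) (.inr w) = nbrColors H d w := by
  let := Classical.decRel H.Adj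
  let := Classical.decRel (G ⊕g H).Adj
  have h : (G ⊕g H).neighborFinset (.inr w) = (H.neighborFinset w).map .inr := by
    ext (u | u) <;> simp
  simp only [nbrColors, h, Finset.map_val, Multiset.map_map]
  rfl

def IsEquitableWith (G : SimpleGraph V) (ℓ : V → ℕ) (m : ℕ → Multiset ℕ) : Prop :=
  ∀ v, nbrColors G ℓ v = m (ℓ v)

lemma IsEquitableWith.sum {G : SimpleGraph V} {H : SimpleGraph W} {ℓA : V → ℕ} {ℓB : W → ℕ}
    {m : ℕ → Multiset ℕ} (hA : IsEquitableWith G ℓA m) (hB : IsEquitableWith H ℓB m) :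
    IsEquitableWith (G ⊕g H) (Sum.elim ℓA ℓB) m := by
  rintro (v | w)
  · exact (nbrColors_sum_inl G H ℓA ℓB v).trans (hA v)
  · exact (nbrColors_sum_inr G H ℓA ℓB w).trans (hB w)

lemma IsEquitableWith.nbrColors_eq_of_factorsThrough {G : SimpleGraph V} {ℓ c : V → ℕ}
    {m : ℕ → Multiset ℕ} (hℓ : IsEquitableWith G ℓ m) (hc : c.FactorsThrough ℓ) {v w : V}
    (h : ℓ v = ℓ w) : nbrColors G c v = nbrColors G c w := by
  obtain ⟨g, rfl⟩ := (factorsThrough_iff c).1 hc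
  rw [nbrColors_comp, nbrColors_comp, hℓ v, hℓ w, h]

theorem IsCR.eq_iff_of_isEquitableWith {G : SimpleGraph V} {C : ℕ → V → ℕ} {ℓ : V → ℕ}
    {m : ℕ → Multiset ℕ} (hC : IsCR G C) (hℓ : IsEquitableWith G ℓ m)
    (h₀ : ∀ v w, C 0 v = C 0 w ↔ ℓ v = ℓ w) (t : ℕ) (v w : V) :
    C t v = C t w ↔ ℓ v = ℓ w := by
  induction t generalizing v w with
  | zero => exact h₀ v w
  | succ t ih =>
    rw [hC t v w, ih v w]
    exact ⟨And.left, fun h => ⟨h, hℓ.nbrColors_eq_of_factorsThrough (fun a b => (ih a b).2) h⟩⟩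

lemma IsParallelCR.isCR_sum {G : SimpleGraph V} {H : SimpleGraph W} {CG : ℕ → V → ℕ}
    {CH : ℕ → W → ℕ} (h : IsParallelCR G H CG CH) :
    IsCR (G ⊕g H) (fun t => Sum.elim (CG t) (CH t)) := by
  obtain ⟨hG, hH, hGH⟩ := h
  rintro t (v | v) (w | w) <;>
    simp only [Sum.elim_inl, Sum.elim_inr, nbrColors_sum_inl, nbrColors_sum_inr]
  · exact hG t v w
  · exact hGH t v w
  · exact eq_comm.trans ((hGH t w v).trans (and_congr eq_comm eq_comm))
  · exact hH t v w

lemma map_univ_eq_of_factorsThrough {c ℓ : V → ℕ} {d ℓ' : W → ℕ}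
    (h : (Sum.elim c d).FactorsThrough (Sum.elim ℓ ℓ'))
    (hℓ : Finset.univ.val.map ℓ = Finset.univ.val.map ℓ') :
    Finset.univ.val.map c = Finset.univ.val.map d := by
  obtain ⟨g, hg⟩ := (factorsThrough_iff _).1 h
  have hc : c = g ∘ ℓ := funext fun v => congrFun hg (.inl v)
  have hd : d = g ∘ ℓ' := funext fun w => congrFun hg (.inr w)
  rw [hc, hd, ← Multiset.map_map, hℓ, Multiset.map_map]

end ColorRefinement

abbrev C12 : SimpleGraph (ZMod 12) := circulantGraph {1, 2}

lemma circulantGraph.exists_iso_apply_eq {G : Type*} [AddGroup G] (s : Set G) (v w : G) :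
    ∃ φ : circulantGraph s ≃g circulantGraph s, φ v = w :=
  ⟨⟨Equiv.addRight (-v + w), circulantGraph_adj_translate⟩, add_neg_cancel_left v w⟩

def HasMonochromaticTriangle {V : Type*} (G : SimpleGraph V) (ℓ : V → ℕ) : Prop :=
  ∃ x y z, G.Adj x y ∧ G.Adj y z ∧ G.Adj x z ∧ ℓ x = ℓ y ∧ ℓ y = ℓ z

lemma HasMonochromaticTriangle.map {V W : Type*} {G : SimpleGraph V} {H : SimpleGraph W}
    {ℓ : V → ℕ} {ℓ' : W → ℕ} (φ : G ≃g H) (hφ : ∀ v, ℓ' (φ v) = ℓ v)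
    (h : HasMonochromaticTriangle G ℓ) : HasMonochromaticTriangle H ℓ' := by
  obtain ⟨x, y, z, hxy, hyz, hxz, hℓxy, hℓyz⟩ := h
  exact ⟨φ x, φ y, φ z, φ.map_adj_iff.2 hxy, φ.map_adj_iff.2 hyz, φ.map_adj_iff.2 hxz,
    by rw [hφ, hφ, hℓxy], by rw [hφ, hφ, hℓyz]⟩

def blockColoring (v : ZMod 12) : ℕ := v.val / 3 % 2

def parityColoring (v : ZMod 12) : ℕ := v.val % 2

lemma hasMonochromaticTriangle_block : HasMonochromaticTriangle C12 blockColoring :=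
  ⟨0, 1, 2, by decide⟩

lemma not_hasMonochromaticTriangle_parity : ¬ HasMonochromaticTriangle C12 parityColoring := by
  unfold HasMonochromaticTriangle
  decide

lemma isEquitableWith_block : IsEquitableWith C12 blockColoring (fun _ => {0, 0, 1, 1}) := by
  intro v
  rw [nbrColors_eq_map_filter]
  revert v
  decide

lemma isEquitableWith_parity : IsEquitableWith C12 parityColoring (fun _ => {0, 0, 1, 1}) := by
  intro v
  rw [nbrColors_eq_map_filter]
  revert v
  decide

lemma map_univ_block_eq_parity :
    (Finset.univ.val.map blockColoring) = Finset.univ.val.map parityColoring := by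
  decide

/-- Theorem 2 of the paper: for any orbit-invariant vertex labeling `f` of finite graphs,
there exist non-isomorphic vertex-colored graphs `A`, `B` such that after augmenting each
node color `ℓ v` to the pair `(ℓ v, f G v)` (via an injective RELABEL), the two colored
graphs are still not distinguished by 1-WL color refinement. -/
theorem orbit_invariant_PSE_not_downstream_universal (D : Type*)
    (f : ∀ (V : Type) [Fintype V], SimpleGraph V → V → D)
    (hf : ∀ (V : Type) [Fintype V] (G : SimpleGraph V) (v w : V),
      (∃ φ : G ≃g G, φ v = w) → f V G v = f V G w) :
    ∃ (A B : SimpleGraph (ZMod 12)) (ℓA ℓB : ZMod 12 → ℕ),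
      (¬ ∃ φ : A ≃g B, ∀ v : ZMod 12, ℓB (φ v) = ℓA v) ∧
      ∀ (CA CB : ℕ → ZMod 12 → ℕ),
        (∀ v w, CA 0 v = CA 0 w ↔ (ℓA v = ℓA w ∧ f (ZMod 12) A v = f (ZMod 12) A w)) →
        (∀ v w, CB 0 v = CB 0 w ↔ (ℓB v = ℓB w ∧ f (ZMod 12) B v = f (ZMod 12) B w)) →
        (∀ v w, CA 0 v = CB 0 w ↔ (ℓA v = ℓB w ∧ f (ZMod 12) A v = f (ZMod 12) B w)) →
        IsParallelCR A B CA CB →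
        ∀ t : ℕ, (Finset.univ.val.map (CA t)) = (Finset.univ.val.map (CB t)) := by
  refine ⟨C12, C12, blockColoring, parityColoring, ?_, ?_⟩
  · rintro ⟨φ, hφ⟩
    exact not_hasMonochromaticTriangle_parity (hasMonochromaticTriangle_block.map φ hφ)
  intro CA CB h₀A h₀B h₀AB hCR t
  have hf_const : ∀ v w, f (ZMod 12) C12 v = f (ZMod 12) C12 w := fun v w =>
    hf _ _ v w (circulantGraph.exists_iso_apply_eq _ v w)
  have h₀ := sum_elim_eq_iff (fun v w => (h₀A v w).trans (and_iff_left (hf_const v w)))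
    (fun v w => (h₀B v w).trans (and_iff_left (hf_const v w)))
    (fun v w => (h₀AB v w).trans (and_iff_left (hf_const v w)))
  have hCt := hCR.isCR_sum.eq_iff_of_isEquitableWith
    (isEquitableWith_block.sum isEquitableWith_parity) h₀ t
  exact map_univ_eq_of_factorsThrough (fun x y => (hCt x y).2) map_univ_block_eq_parity
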